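/- arXiv:2406.07181 — 2 statements merged into one kernel-verified Lean document; each statement's English description precedes it below -/
import Mathlib

section
/- Let d : ℝ → ℝ be Lipschitz continuous with constant L. Then there exists a constant C (depending only on L) such that for all x ∈ ℝ and all s with 0 < |s| < π, |tanh((d(x)-d(x-s))/2)/tan(s/2) - (d(x)-d(x-s))/2 / (s/2)| ≤ C·s^2. -/
/-!
Near `0`, `tanh δ = δ + O(δ³)` and `1 / tan t = 1 / t + O(t)`. Splitting
`tanh δ / tan t - δ / t = (tanh δ - δ) / tan t - δ (1 / t - 1 / tan t)`, both terms are `O(t²)`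
as soon as `δ = O(t)`, which the Lipschitz bound gives for `δ = (d x - d (x - s)) / 2`, `t = s / 2`.
-/

namespace Real

theorem hasDerivAt_tanh (x : ℝ) : HasDerivAt tanh (1 - tanh x ^ 2) x := by
  have h := (hasDerivAt_sinh x).div (hasDerivAt_cosh x) (cosh_pos x).ne'
  rw [show (sinh / cosh) = tanh from funext fun y => (tanh_eq_sinh_div_cosh y).symm] at h
  refine h.congr_deriv ?_
  rw [tanh_eq_sinh_div_cosh, div_pow, one_sub_div (pow_ne_zero 2 (cosh_pos x).ne')]
  ring

@[fun_prop]
theorem continuous_tanh : Continuous tanh :=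
  continuous_iff_continuousAt.mpr fun x => (hasDerivAt_tanh x).continuousAt

theorem tanh_nonneg {x : ℝ} (hx : 0 ≤ x) : 0 ≤ tanh x := by
  rw [tanh_eq_sinh_div_cosh]
  exact div_nonneg (sinh_nonneg_iff.mpr hx) (cosh_pos x).le

theorem tanh_le_self {x : ℝ} (hx : 0 ≤ x) : tanh x ≤ x := by
  have hmono : Monotone fun y => y - tanh y :=
    monotone_of_hasDerivAt_nonneg (fun y => (hasDerivAt_id y).sub (hasDerivAt_tanh y))
      fun y => by simp only [sub_sub_cancel]; positivity
  simpa [tanh_zero] using hmono hx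

theorem self_sub_cube_div_three_le_tanh {x : ℝ} (hx : 0 ≤ x) : x - x ^ 3 / 3 ≤ tanh x := by
  have hmono : MonotoneOn (fun y => tanh y - (y - y ^ 3 / 3)) (Set.Ici 0) := by
    refine monotoneOn_of_hasDerivWithinAt_nonneg (convex_Ici 0) (f' := fun y => y ^ 2 - tanh y ^ 2)
      (by fun_prop) (fun y _ => ?_) fun y hy => ?_
    · exact (((hasDerivAt_tanh y).sub ((hasDerivAt_id' y).sub
        ((hasDerivAt_pow 3 y).div_const 3))).congr_deriv (by norm_num)).hasDerivWithinAt
    · rw [interior_Ici] at hy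
      simp only [sub_nonneg]
      exact pow_le_pow_left₀ (tanh_nonneg hy.le) (tanh_le_self hy.le) 2
  simpa [tanh_zero] using hmono Set.self_mem_Ici hx hx

theorem abs_tanh_sub_self_le (x : ℝ) : |tanh x - x| ≤ |x| ^ 3 / 3 := by
  wlog hx : 0 ≤ x
  · simpa [tanh_neg, neg_add_eq_sub, abs_sub_comm] using this (-x) (by linarith)
  rw [abs_of_nonpos (by linarith [tanh_le_self hx]), abs_of_nonneg hx]
  linarith [self_sub_cube_div_three_le_tanh hx]

theorem tan_sub_self_le {t : ℝ} (ht₀ : 0 ≤ t) (ht : t < π / 2) :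
    tan t - t ≤ tan t * (t ^ 2 / 2) := by
  have hcos : 0 < cos t := cos_pos_of_mem_Ioo ⟨by linarith [pi_pos], ht⟩
  have htan : 0 ≤ tan t := tan_nonneg_of_nonneg_of_le_pi_div_two ht₀ ht.le
  calc tan t - t ≤ tan t - sin t := by linarith [sin_le ht₀]
    _ = tan t * (1 - cos t) := by rw [tan_eq_sin_div_cos]; field_simp
    _ ≤ tan t * (t ^ 2 / 2) := by
      gcongr
      linarith [one_sub_sq_div_two_le_cos (x := t)]

theorem abs_inv_sub_inv_tan_le {t : ℝ} (ht₀ : 0 < t) (ht : t < π / 2) :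
    |t⁻¹ - (tan t)⁻¹| ≤ t / 2 := by
  have htan : t ≤ tan t := le_tan ht₀.le ht
  have htan₀ : 0 < tan t := ht₀.trans_le htan
  rw [inv_sub_inv ht₀.ne' htan₀.ne', abs_of_nonneg (by positivity [sub_nonneg.mpr htan]),
    div_le_iff₀ (by positivity)]
  nlinarith [tan_sub_self_le ht₀.le ht]

theorem abs_tanh_div_tan_sub_div_le {K t δ : ℝ} (ht₀ : t ≠ 0) (ht : |t| < π / 2)
    (hδ : |δ| ≤ K * |t|) :
    |tanh δ / tan t - δ / t| ≤ (K ^ 3 / 3 + K / 2) * t ^ 2 := by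
  wlog ht_pos : 0 < t
  · have := this (t := -t) (δ := -δ) (neg_ne_zero.mpr ht₀) (by rwa [abs_neg])
      (by rwa [abs_neg, abs_neg]) (by grind)
    simpa [tanh_neg, tan_neg, neg_div_neg_eq] using this
  rw [abs_of_pos ht_pos] at ht hδ
  have hK : 0 ≤ K := nonneg_of_mul_nonneg_left ((abs_nonneg δ).trans hδ) ht_pos
  have htan : t ≤ tan t := le_tan ht_pos.le ht
  have hsplit : tanh δ / tan t - δ / t = (tanh δ - δ) / tan t - δ * (t⁻¹ - (tan t)⁻¹) := by
    ring
  have hcubic : |tanh δ - δ| / tan t ≤ K ^ 3 / 3 * t ^ 2 := by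
    rw [div_le_iff₀ (ht_pos.trans_le htan)]
    calc |tanh δ - δ| ≤ |δ| ^ 3 / 3 := abs_tanh_sub_self_le δ
      _ ≤ (K * t) ^ 3 / 3 := by gcongr
      _ = K ^ 3 / 3 * t ^ 2 * t := by ring
      _ ≤ K ^ 3 / 3 * t ^ 2 * tan t := by gcongr
  calc |tanh δ / tan t - δ / t|
      ≤ |tanh δ - δ| / tan t + |δ| * |t⁻¹ - (tan t)⁻¹| := by
        rw [hsplit, ← abs_of_pos (ht_pos.trans_le htan), ← abs_div, ← abs_mul,
          abs_of_pos (ht_pos.trans_le htan)]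
        exact abs_sub _ _
    _ ≤ K ^ 3 / 3 * t ^ 2 + K * t * (t / 2) := by
        gcongr
        exact abs_inv_sub_inv_tan_le ht_pos ht
    _ = (K ^ 3 / 3 + K / 2) * t ^ 2 := by ring

end Real

open Real NNReal in
theorem abs_tanh_div_tan_sub_delta_div_half_le
    (L : ℝ≥0) :
    ∃ C : ℝ, 0 < C ∧ ∀ (d : ℝ → ℝ), LipschitzWith L d →
      ∀ (x s : ℝ), 0 < |s| → |s| < π →
        |Real.tanh ((d x - d (x - s)) / 2) / Real.tan (s / 2) -
          ((d x - d (x - s)) / 2) / (s / 2)| ≤ C * s ^ 2 := by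
  refine ⟨((L : ℝ) ^ 3 / 3 + L / 2 + 1) / 4, by positivity, fun d hd x s hs₀ hs => ?_⟩
  have hδ : |(d x - d (x - s)) / 2| ≤ L * |s / 2| := by
    have := hd.dist_le_mul x (x - s)
    rw [Real.dist_eq, Real.dist_eq, sub_sub_cancel] at this
    rw [abs_div, abs_div, abs_two]
    linarith
  calc _ ≤ ((L : ℝ) ^ 3 / 3 + L / 2) * (s / 2) ^ 2 :=
        abs_tanh_div_tan_sub_div_le (by simpa using hs₀) (by rw [abs_div, abs_two]; linarith) hδ
    _ ≤ ((L : ℝ) ^ 3 / 3 + L / 2 + 1) / 4 * s ^ 2 := by nlinarith [sq_nonneg s]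
end

section
/- Let p, n, q be natural numbers with 1 ≤ p ≤ n + q + 1, and let b₁,…,bₙ, c₁,…,c_q : ℝ → ℝ be Lipschitz with constants L. Then the kernel K_B(ξ,s) := (1/(2π)) · [∏ᵢ (tanh((bᵢ(ξ)-bᵢ(ξ-s))/2)/tan(s/2))] · [∏ᵢ ((cᵢ(ξ)-cᵢ(ξ-s))/2 / tan(s/2))] · (tan(s/2))^{p-1} / ∏ⱼ(1 + (tanh((aⱼ(ξ)-aⱼ(ξ-s))/2)/tan(s/2))²) is bounded: |K_B(ξ,s)| ≤ C·∏ᵢ L(cᵢ) for all ξ ∈ ℝ and 0 < |s| < π, where C depends only on n, m, p, q and the Lipschitz constants of the bᵢ. -/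
open Real NNReal

/-!
Put `τ = |tan (s / 2)|` and `ρ = min 1 τ⁻¹`. Since `|s| / 2 ≤ τ` and `|s| < π`, the bounds
`|tanh x| ≤ min 1 |x|` and the Lipschitz bounds make every `b`- and `c`-factor of the kernel
`O(ρ)`, while the denominator is at least `1`. So the kernel is `O(ρ ^ (n + q) * τ ^ (p - 1))`,
and this is at most `1` because `p - 1 ≤ n + q`: it equals `τ ^ (p - 1)` when `τ ≤ 1` and
`τ ^ (p - 1) / τ ^ (n + q)` when `τ ≥ 1`.
-/

namespace Real

-- Compare `∑ x ^ (2k+1) / (2k+1)!` with `∑ x ^ (2k+1) / (2k)!` term by term.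
lemma sinh_le_mul_cosh {x : ℝ} (hx : 0 ≤ x) : sinh x ≤ x * cosh x := by
  refine hasSum_le (fun k ↦ ?_) (hasSum_sinh x) ((hasSum_cosh x).mul_left x)
  rw [pow_succ', mul_div_assoc]
  gcongr
  omega

lemma abs_tanh_le_abs (x : ℝ) : |tanh x| ≤ |x| := by
  rw [tanh_eq_sinh_div_cosh, abs_div, abs_sinh, abs_of_pos (cosh_pos x), ← cosh_abs,
    div_le_iff₀ (cosh_pos _)]
  exact sinh_le_mul_cosh (abs_nonneg x)

lemma abs_tanh_le_one (x : ℝ) : |tanh x| ≤ 1 :=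
  abs_le.mpr ⟨(neg_one_lt_tanh x).le, (tanh_lt_one x).le⟩

lemma abs_le_abs_tan {x : ℝ} (hx : |x| < π / 2) : |x| ≤ |tan x| := by
  rcases le_total 0 x with h | h
  · rw [abs_of_nonneg h] at hx ⊢
    exact (le_tan h hx).trans (le_abs_self _)
  · rw [abs_of_nonpos h] at hx ⊢
    exact (le_tan (neg_nonneg.mpr h) hx).trans (by rw [tan_neg]; exact neg_le_abs _)

end Real

lemma LipschitzWith.abs_sub_sub_le {f : ℝ → ℝ} {K : ℝ≥0} (hf : LipschitzWith K f) (x s : ℝ) :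
    |f x - f (x - s)| ≤ K * |s| := by
  simpa [Real.dist_eq] using hf.dist_le_mul x (x - s)

lemma div_le_mul_min_one_inv {y A τ : ℝ} (hτ : 0 < τ) (h₁ : y ≤ A * τ) (h₂ : y ≤ A) :
    y / τ ≤ A * min 1 τ⁻¹ := by
  rcases le_total τ 1 with h | h
  · rw [min_eq_left (one_le_inv₀ hτ |>.mpr h), mul_one, div_le_iff₀ hτ]
    exact h₁
  · rw [min_eq_right (inv_le_one_of_one_le₀ h), div_eq_mul_inv]
    exact mul_le_mul_of_nonneg_right h₂ (inv_nonneg.mpr hτ.le)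

lemma min_one_inv_pow_mul_pow_le_one {τ : ℝ} (hτ : 0 < τ) {j N : ℕ} (h : j ≤ N) :
    min 1 τ⁻¹ ^ N * τ ^ j ≤ 1 := by
  rcases le_total τ 1 with h1 | h1
  · rw [min_eq_left (one_le_inv₀ hτ |>.mpr h1), one_pow, one_mul]
    exact pow_le_one₀ hτ.le h1
  · rw [min_eq_right (inv_le_one_of_one_le₀ h1), inv_pow, inv_mul_le_one₀ (by positivity)]
    exact pow_le_pow_right₀ h1 h

lemma abs_prod_le_prod_mul_pow {ι : Type*} [Fintype ι] {f g : ι → ℝ} {r : ℝ}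
    (h : ∀ i, |f i| ≤ g i * r) : |∏ i, f i| ≤ (∏ i, g i) * r ^ Fintype.card ι := by
  rw [Finset.abs_prod, ← Finset.card_univ, Finset.prod_mul_pow_card]
  exact Finset.prod_le_prod (fun i _ ↦ abs_nonneg _) (fun i _ ↦ h i)

section KernelFactors

variable {f : ℝ → ℝ} {K : ℝ≥0} {s : ℝ}

lemma half_abs_le_abs_tan_half (hs : |s| < π) : |s| / 2 ≤ |tan (s / 2)| := by
  have h := abs_le_abs_tan (x := s / 2) (by rw [abs_div, abs_two]; linarith)
  rwa [abs_div, abs_two] at h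

lemma abs_tan_half_pos (hs₀ : 0 < |s|) (hs : |s| < π) : 0 < |tan (s / 2)| :=
  (half_pos hs₀).trans_le (half_abs_le_abs_tan_half hs)

lemma LipschitzWith.abs_half_sub_sub_le_mul_abs_tan_half (hf : LipschitzWith K f) (x : ℝ)
    (hs : |s| < π) : |(f x - f (x - s)) / 2| ≤ K * |tan (s / 2)| := by
  rw [abs_div, abs_two, div_le_iff₀ two_pos]
  calc |f x - f (x - s)| ≤ K * |s| := hf.abs_sub_sub_le x s
    _ ≤ K * (2 * |tan (s / 2)|) := by
        gcongr; linarith [half_abs_le_abs_tan_half hs]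
    _ = K * |tan (s / 2)| * 2 := by ring

lemma LipschitzWith.abs_tanh_div_tan_half_le (hf : LipschitzWith K f) (x : ℝ)
    (hs₀ : 0 < |s|) (hs : |s| < π) :
    |tanh ((f x - f (x - s)) / 2) / tan (s / 2)| ≤ max (K : ℝ) 1 * min 1 |tan (s / 2)|⁻¹ := by
  rw [abs_div]
  refine div_le_mul_min_one_inv (abs_tan_half_pos hs₀ hs) ?_
    ((abs_tanh_le_one _).trans (le_max_right _ _))
  calc |tanh ((f x - f (x - s)) / 2)| ≤ |(f x - f (x - s)) / 2| := abs_tanh_le_abs _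
    _ ≤ K * |tan (s / 2)| := hf.abs_half_sub_sub_le_mul_abs_tan_half x hs
    _ ≤ max (K : ℝ) 1 * |tan (s / 2)| := by gcongr; exact le_max_left _ _

lemma LipschitzWith.abs_half_sub_div_tan_half_le (hf : LipschitzWith K f) (x : ℝ)
    (hs₀ : 0 < |s|) (hs : |s| < π) :
    |(f x - f (x - s)) / 2 / tan (s / 2)| ≤ K * (π / 2) * min 1 |tan (s / 2)|⁻¹ := by
  have hπ : 1 ≤ π / 2 := by linarith [pi_gt_three]
  rw [abs_div]
  refine div_le_mul_min_one_inv (abs_tan_half_pos hs₀ hs) ?_ ?_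
  · calc |(f x - f (x - s)) / 2| ≤ K * |tan (s / 2)| :=
          hf.abs_half_sub_sub_le_mul_abs_tan_half x hs
      _ ≤ K * (π / 2) * |tan (s / 2)| := by gcongr; exact le_mul_of_one_le_right K.2 hπ
  · rw [abs_div, abs_two]
    calc |f x - f (x - s)| / 2 ≤ K * |s| / 2 := by gcongr; exact hf.abs_sub_sub_le x s
      _ ≤ K * (π / 2) := by rw [mul_div_assoc]; gcongr

end KernelFactors

theorem kernel_Bnmpq_bounded_general (n m p q : ℕ) (hp2 : p ≤ n + q + 1)
    (Lb : Fin n → ℝ≥0) :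
    ∃ C : ℝ, 0 < C ∧
      ∀ (a : Fin m → ℝ → ℝ) (b : Fin n → ℝ → ℝ) (c : Fin q → ℝ → ℝ)
        (Lc : Fin q → ℝ≥0),
        (∀ i, LipschitzWith (Lb i) (b i)) →
        (∀ i, LipschitzWith (Lc i) (c i)) →
        ∀ (ξ s : ℝ), 0 < |s| → |s| < π →
          |(1 / (2 * π)) *
              (∏ i, Real.tanh ((b i ξ - b i (ξ - s)) / 2) / Real.tan (s / 2)) *
              (∏ i, ((c i ξ - c i (ξ - s)) / 2) / Real.tan (s / 2)) *
              Real.tan (s / 2) ^ (p - 1) /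
              ∏ j, (1 + (Real.tanh ((a j ξ - a j (ξ - s)) / 2) / Real.tan (s / 2)) ^ 2)| ≤
            C * ∏ i, (Lc i : ℝ) := by
  refine ⟨1 / (2 * π) * (∏ i, max (Lb i : ℝ) 1) * (π / 2) ^ q, by positivity, ?_⟩
  intro a b c Lc hb hc ξ s hs₀ hs
  set ρ := min 1 |tan (s / 2)|⁻¹
  have hB := abs_prod_le_prod_mul_pow fun i ↦ (hb i).abs_tanh_div_tan_half_le ξ hs₀ hs
  have hC := abs_prod_le_prod_mul_pow fun i ↦ (hc i).abs_half_sub_div_tan_half_le ξ hs₀ hs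
  have hD : 1 ≤ ∏ j, (1 + (tanh ((a j ξ - a j (ξ - s)) / 2) / tan (s / 2)) ^ 2) :=
    Finset.one_le_prod fun j _ ↦ le_add_of_nonneg_right (sq_nonneg _)
  have hρ := min_one_inv_pow_mul_pow_le_one (abs_tan_half_pos hs₀ hs) (by omega : p - 1 ≤ n + q)
  rw [Fintype.card_fin] at hB hC
  rw [Finset.prod_mul_distrib, Finset.prod_const, Finset.card_univ, Fintype.card_fin] at hC
  rw [abs_div, abs_of_pos (one_pos.trans_le hD)]
  refine (div_le_self (abs_nonneg _) hD).trans ?_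
  rw [abs_mul, abs_mul, abs_mul, abs_pow, abs_of_pos (by positivity : (0 : ℝ) < 1 / (2 * π))]
  calc 1 / (2 * π) * |∏ i, tanh ((b i ξ - b i (ξ - s)) / 2) / tan (s / 2)| *
        |∏ i, (c i ξ - c i (ξ - s)) / 2 / tan (s / 2)| * |tan (s / 2)| ^ (p - 1)
      ≤ 1 / (2 * π) * ((∏ i, max (Lb i : ℝ) 1) * ρ ^ n) *
        ((∏ i, (Lc i : ℝ)) * (π / 2) ^ q * ρ ^ q) * |tan (s / 2)| ^ (p - 1) := by
        gcongr
    _ = 1 / (2 * π) * (∏ i, max (Lb i : ℝ) 1) * (π / 2) ^ q * (∏ i, (Lc i : ℝ)) *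
        (ρ ^ (n + q) * |tan (s / 2)| ^ (p - 1)) := by ring
    _ ≤ 1 / (2 * π) * (∏ i, max (Lb i : ℝ) 1) * (π / 2) ^ q * ∏ i, (Lc i : ℝ) :=
        mul_le_of_le_one_right (by positivity) hρ

/-- Boundedness of the kernel of the operators `B_{n,m}^{p,q}` when `1 ≤ p ≤ n + q + 1`:
the kernel is bounded by a constant depending only on `n, m, p, q` and the Lipschitz
constants of the `bᵢ`, times the product of the Lipschitz constants of the `cᵢ`. -/
theorem kernel_Bnmpq_bounded (n m p q : ℕ) (hp1 : 1 ≤ p) (hp2 : p ≤ n + q + 1)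
    (Lb : Fin n → ℝ≥0) :
    ∃ C : ℝ, 0 < C ∧
      ∀ (a : Fin m → ℝ → ℝ) (b : Fin n → ℝ → ℝ) (c : Fin q → ℝ → ℝ)
        (Lc : Fin q → ℝ≥0),
        (∀ i, LipschitzWith (Lb i) (b i)) →
        (∀ i, LipschitzWith (Lc i) (c i)) →
        ∀ (ξ s : ℝ), 0 < |s| → |s| < π →
          |(1 / (2 * π)) *
              (∏ i, Real.tanh ((b i ξ - b i (ξ - s)) / 2) / Real.tan (s / 2)) *
              (∏ i, ((c i ξ - c i (ξ - s)) / 2) / Real.tan (s / 2)) *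
              Real.tan (s / 2) ^ (p - 1) /
              ∏ j, (1 + (Real.tanh ((a j ξ - a j (ξ - s)) / 2) / Real.tan (s / 2)) ^ 2)| ≤
            C * ∏ i, (Lc i : ℝ) :=
  kernel_Bnmpq_bounded_general n m p q hp2 Lb
end
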